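/- arXiv:1503.05612 — 3 statements merged into one kernel-verified Lean document; each statement's English description precedes it below -/
import Mathlib

section
/- (Janson's inequality, graph version.) Let p ∈ (0,1), let G ~ G(n,p), and let {H_i}_{i ∈ I} be a finite family of subgraphs of the complete graph on vertex set {1, …, n}. For each i ∈ I let X_i be the indicator random variable of the event H_i ⊆ G, and for an ordered pair (i, j) with i ≠ j write H_i ~ H_j if E(H_i) ∩ E(H_j) ≠ ∅. Set X = Σ_{i ∈ I} X_i, μ = E[X] = Σ_{i ∈ I} p^{e(H_i)}, and δ = Σ_{(i,j): i ≠ j, H_i ~ H_j} p^{e(H_i) + e(H_j) − e(H_i ∩ H_j)}. Then for every 0 < γ < 1, Pr[X < (1−γ)μ] ≤ exp(−γ²μ² / (2(μ + δ))). -/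
/-!
Janson's inequality through the Laplace transform `ψ(t) = E[e^{-tX}]`. Fix `i` and split
`X = Y_i + Z_i`, where `Y_i` counts the `H_j` sharing an edge with `H_i`. Then
`e^{-tX} ≥ (1 - t Y_i) e^{-t Z_i}`; the event `H_i ⊆ G` is independent of `Z_i`, which does not
see the edges of `H_i`, and Harris's inequality separates the increasing `X_i Y_i` from the
decreasing `e^{-t Z_i}`. This gives `E[X_i e^{-tX}] ≥ (E X_i - t E[X_i Y_i]) ψ(t)`; summing over
`i`, `-ψ' ≥ (μ - t (μ + δ)) ψ`, hence `ψ(t) ≤ exp(-μ t + (μ + δ) t² / 2)`, and Markov's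
inequality for `e^{-tX}` at `t = γ μ / (μ + δ)` finishes the proof. Of `G(n, p)` only the FKG
lattice condition and this independence property are used.
-/

open Finset Filter Real
open scoped Classical

noncomputable def edgeCount {α : Type*} (G : SimpleGraph α) : ℕ := Nat.card G.edgeSet

/-- The probability that the binomial random graph `G(n,p)` satisfies the property `P`. -/
noncomputable def gnpProb (n : ℕ) (p : ℝ) (P : SimpleGraph (Fin n) → Prop) : ℝ :=
  ∑ G : SimpleGraph (Fin n),
    if P G then p ^ edgeCount G * (1 - p) ^ (n.choose 2 - edgeCount G) else 0

theorem sum_mul_mul_le_of_monotone_of_antitone {α : Type*} [DistribLattice α] [Fintype α]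
    {w f g : α → ℝ} (hw₀ : 0 ≤ w) (hw₁ : ∑ a, w a = 1)
    (hw : ∀ a b, w a * w b ≤ w (a ⊓ b) * w (a ⊔ b)) (hf : Monotone f) (hg : Antitone g) :
    ∑ a, w a * (f a * g a) ≤ (∑ a, w a * f a) * ∑ a, w a * g a := by
  set M := ∑ b, (|f b| + |g b|)
  have hfM : ∀ a, |f a| ≤ M := fun a => (le_add_of_nonneg_right (abs_nonneg _)).trans
    (single_le_sum (f := fun b => |f b| + |g b|) (fun _ _ => by positivity) (mem_univ a))
  have hgM : ∀ a, |g a| ≤ M := fun a => (le_add_of_nonneg_left (abs_nonneg _)).trans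
    (single_le_sum (f := fun b => |f b| + |g b|) (fun _ _ => by positivity) (mem_univ a))
  -- FKG needs nonnegative monotone functions: shift `f` up and use `M - g`
  have h := fkg (μ := w) (f := fun a => f a + M) (g := fun a => M - g a) hw₀
    (fun a => by simp only [Pi.zero_apply]; linarith [(abs_le.1 (hfM a)).1])
    (fun a => by simp only [Pi.zero_apply]; linarith [(abs_le.1 (hgM a)).2])
    (fun a b hab => by dsimp only; linarith [hf hab])
    (fun a b hab => by dsimp only; linarith [hg hab]) hw
  simp only [mul_add, mul_sub, add_mul, sum_add_distrib, sum_sub_distrib, ← sum_mul, hw₁,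
    one_mul] at h
  have e₁ : ∑ a, w a * (f a * M) = (∑ a, w a * f a) * M := by simp only [← mul_assoc, sum_mul]
  have e₂ : ∑ a, w a * (M * g a) = M * ∑ a, w a * g a := by simp only [mul_sum, mul_left_comm]
  linarith

theorem le_mul_exp_of_hasDerivAt {ψ ψ' : ℝ → ℝ} {a b : ℝ} (hψ : ∀ s, HasDerivAt ψ (ψ' s) s)
    (hψ' : ∀ s, 0 ≤ s → (a - b * s) * ψ s ≤ -ψ' s) {t : ℝ} (ht : 0 ≤ t) :
    ψ t ≤ ψ 0 * exp (b / 2 * t ^ 2 - a * t) := by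
  set g : ℝ → ℝ := fun s => ψ s * exp (a * s - b / 2 * s ^ 2)
  have hg : ∀ s, HasDerivAt g (exp (a * s - b / 2 * s ^ 2) * (ψ' s + (a - b * s) * ψ s)) s :=
    fun s => ((hψ s).fun_mul ((((hasDerivAt_id s).const_mul a).fun_sub
      ((hasDerivAt_pow 2 s).const_mul (b / 2))).exp)).congr_deriv (by simp; ring)
  have hanti : AntitoneOn g (Set.Ici 0) := by
    refine antitoneOn_of_deriv_nonpos (convex_Ici 0)
      (fun s _ => (hg s).continuousAt.continuousWithinAt)
      (fun s _ => (hg s).differentiableAt.differentiableWithinAt) fun s hs => ?_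
    rw [interior_Ici] at hs
    rw [(hg s).deriv]
    exact mul_nonpos_of_nonneg_of_nonpos (exp_pos _).le (by linarith [hψ' s (le_of_lt hs)])
  have hgt : g t ≤ ψ 0 := by
    simpa [g] using hanti (Set.mem_Ici.2 le_rfl) (Set.mem_Ici.2 ht) ht
  calc ψ t = g t * exp (b / 2 * t ^ 2 - a * t) := by
        simp only [g, mul_assoc, ← exp_add]; ring_nf; simp
    _ ≤ ψ 0 * exp (b / 2 * t ^ 2 - a * t) := by gcongr

section Laplace

variable {α : Type*} [Fintype α]

noncomputable def laplace (w X : α → ℝ) (t : ℝ) : ℝ := ∑ a, w a * exp (-(t * X a))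

theorem hasDerivAt_laplace (w X : α → ℝ) (t : ℝ) :
    HasDerivAt (laplace w X) (-∑ a, w a * (X a * exp (-(t * X a)))) t := by
  rw [← sum_neg_distrib]
  exact HasDerivAt.fun_sum fun a _ =>
    ((((hasDerivAt_id t).mul_const (X a)).fun_neg.exp).const_mul (w a)).congr_deriv
      (by simp only [id, one_mul]; ring)

theorem laplace_zero {w : α → ℝ} (X : α → ℝ) (hw : ∑ a, w a = 1) : laplace w X 0 = 1 := by
  simp [laplace, hw]

theorem laplace_nonneg {w : α → ℝ} (hw : 0 ≤ w) (X : α → ℝ) (t : ℝ) : 0 ≤ laplace w X t :=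
  sum_nonneg fun a _ => mul_nonneg (hw a) (exp_pos _).le

theorem sum_ite_lt_le_exp_mul_laplace {w : α → ℝ} (hw : 0 ≤ w) (X : α → ℝ) {c t : ℝ}
    (ht : 0 ≤ t) :
    ∑ a, w a * (if X a < c then 1 else 0) ≤ exp (t * c) * laplace w X t := by
  rw [laplace, mul_sum]
  refine sum_le_sum fun a _ => ?_
  rw [mul_left_comm, ← exp_add]
  refine mul_le_mul_of_nonneg_left ?_ (hw a)
  split_ifs with h
  · exact one_le_exp (by nlinarith)
  · exact (exp_pos _).le

end Laplace

section BooleanAlgebra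

variable {α : Type*} [BooleanAlgebra α]

theorem sup_inf_eq_left_of_disjoint {A B K : α} (hA : A ≤ K) (hB : Disjoint B K) :
    (A ⊔ B) ⊓ K = A := by
  rw [inf_sup_right, inf_eq_left.2 hA, hB.eq_bot, sup_bot_eq]

theorem sup_sdiff_eq_right_of_disjoint {A B K : α} (hA : A ≤ K) (hB : Disjoint B K) :
    (A ⊔ B) \ K = B := by
  rw [sup_sdiff, sdiff_eq_bot_iff.2 hA, bot_sup_eq, hB.sdiff_eq_left]

def infSdiffEquiv (K : α) : α ≃ {A // A ≤ K} × {B // B ≤ Kᶜ} where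
  toFun a := (⟨a ⊓ K, inf_le_right⟩, ⟨a \ K, by rw [sdiff_eq]; exact inf_le_right⟩)
  invFun AB := AB.1.1 ⊔ AB.2.1
  left_inv a := sup_inf_sdiff a K
  right_inv := fun ⟨⟨A, hA⟩, ⟨B, hB⟩⟩ => by
    have hBK := le_compl_iff_disjoint_right.1 hB
    ext
    · exact sup_inf_eq_left_of_disjoint hA hBK
    · exact sup_sdiff_eq_right_of_disjoint hA hBK

noncomputable def upIndicator (K a : α) : ℝ := if K ≤ a then 1 else 0

theorem upIndicator_nonneg (K a : α) : 0 ≤ upIndicator K a := by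
  unfold upIndicator; split_ifs <;> norm_num

theorem upIndicator_monotone (K : α) : Monotone (upIndicator K) := fun a b hab => by
  unfold upIndicator
  by_cases ha : K ≤ a
  · simp [ha, ha.trans hab]
  · split_ifs <;> norm_num

theorem upIndicator_mul_upIndicator (K L a : α) :
    upIndicator K a * upIndicator L a = upIndicator (K ⊔ L) a := by
  unfold upIndicator
  by_cases hK : K ≤ a <;> by_cases hL : L ≤ a <;> simp [hK, hL]

theorem upIndicator_sup_of_disjoint {K A B : α} (h : Disjoint K B) :
    upIndicator K (A ⊔ B) = upIndicator K A := by
  simp only [upIndicator]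
  congr 1
  exact propext ⟨fun hK => Disjoint.left_le_of_le_sup_right hK h, fun hK => hK.trans le_sup_left⟩

theorem upIndicator_sdiff_of_disjoint {K L : α} (h : Disjoint L K) (a : α) :
    upIndicator L (a \ K) = upIndicator L a := by
  simp only [upIndicator, le_sdiff, h, and_true]

end BooleanAlgebra

section Counts

variable {α : Type*} [BooleanAlgebra α] {ι : Type*} [Fintype ι] (H : ι → α)

noncomputable def upCount (a : α) : ℝ := ∑ i, upIndicator (H i) a

noncomputable def upCountMeeting (i : ι) (a : α) : ℝ :=
  ∑ j, if Disjoint (H i) (H j) then 0 else upIndicator (H j) a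

noncomputable def upCountDisjoint (i : ι) (a : α) : ℝ :=
  ∑ j, if Disjoint (H i) (H j) then upIndicator (H j) a else 0

theorem upCount_eq_add (i : ι) (a : α) :
    upCount H a = upCountMeeting H i a + upCountDisjoint H i a := by
  rw [upCount, upCountMeeting, upCountDisjoint, ← sum_add_distrib]
  exact sum_congr rfl fun j _ => by split_ifs <;> simp

theorem upCountMeeting_nonneg (i : ι) (a : α) : 0 ≤ upCountMeeting H i a :=
  sum_nonneg fun _ _ => by split_ifs <;> simp [upIndicator_nonneg]

theorem upCountMeeting_monotone (i : ι) : Monotone (upCountMeeting H i) := fun _ _ hab =>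
  sum_le_sum fun _ _ => by split_ifs <;> simp [upIndicator_monotone _ hab]

theorem upCountDisjoint_monotone (i : ι) : Monotone (upCountDisjoint H i) := fun _ _ hab =>
  sum_le_sum fun _ _ => by split_ifs <;> simp [upIndicator_monotone _ hab]

theorem upCountDisjoint_sdiff (i : ι) (a : α) :
    upCountDisjoint H i (a \ H i) = upCountDisjoint H i a :=
  sum_congr rfl fun j _ => by
    split_ifs with h
    · exact upIndicator_sdiff_of_disjoint h.symm a
    · rfl

theorem upIndicator_mul_upCountMeeting_monotone (i : ι) :
    Monotone fun a => upIndicator (H i) a * upCountMeeting H i a := fun a b hab =>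
  mul_le_mul (upIndicator_monotone _ hab) (upCountMeeting_monotone H i hab)
    (upCountMeeting_nonneg H i a) (upIndicator_nonneg _ b)

theorem one_sub_mul_mul_exp_le_exp (i : ι) (a : α) (t : ℝ) :
    (1 - t * upCountMeeting H i a) * exp (-(t * upCountDisjoint H i a))
      ≤ exp (-(t * upCount H a)) := by
  rw [upCount_eq_add H i a, mul_add, neg_add, exp_add]
  gcongr
  linarith [add_one_le_exp (-(t * upCountMeeting H i a))]

end Counts

section Janson

variable {α : Type*} [BooleanAlgebra α] [Fintype α]

noncomputable def upProb (w : α → ℝ) (K : α) : ℝ := ∑ a, w a * upIndicator K a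

theorem upProb_nonneg {w : α → ℝ} (hw : 0 ≤ w) (K : α) : 0 ≤ upProb w K :=
  sum_nonneg fun a _ => mul_nonneg (hw a) (upIndicator_nonneg K a)

/-- Every product measure on a finite powerset, for instance the law of `G(n, p)`, is a Janson
weight. -/
structure IsJansonWeight (w : α → ℝ) : Prop where
  nonneg : 0 ≤ w
  sum_eq_one : ∑ a, w a = 1
  mul_le_inf_mul_sup : ∀ a b, w a * w b ≤ w (a ⊓ b) * w (a ⊔ b)
  sum_upIndicator_mul : ∀ (K : α) (f : α → ℝ), (∀ a, f (a \ K) = f a) →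
    ∑ a, w a * (upIndicator K a * f a) = upProb w K * ∑ a, w a * f a

variable {ι : Type*} [Fintype ι] (H : ι → α) {w : α → ℝ}

noncomputable def expectedUpCount (w : α → ℝ) : ℝ := ∑ i, upProb w (H i)

noncomputable def overlapSum (w : α → ℝ) : ℝ :=
  ∑ i, ∑ j, if i ≠ j ∧ ¬Disjoint (H i) (H j) then upProb w (H i ⊔ H j) else 0

theorem expectedUpCount_nonneg (hw : 0 ≤ w) : 0 ≤ expectedUpCount H w :=
  sum_nonneg fun _ _ => upProb_nonneg hw _

theorem overlapSum_nonneg (hw : 0 ≤ w) : 0 ≤ overlapSum H w :=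
  sum_nonneg fun _ _ => sum_nonneg fun _ _ => by split_ifs <;> simp [upProb_nonneg hw]

theorem sum_upIndicator_mul_upCountMeeting (w : α → ℝ) (i : ι) :
    ∑ a, w a * (upIndicator (H i) a * upCountMeeting H i a)
      = ∑ j, if Disjoint (H i) (H j) then 0 else upProb w (H i ⊔ H j) := by
  simp only [upCountMeeting, mul_sum, upProb]
  rw [sum_comm]
  refine sum_congr rfl fun j _ => ?_
  split_ifs <;> simp [upIndicator_mul_upIndicator]

theorem sum_sum_upIndicator_mul_upCountMeeting_le (hw : 0 ≤ w) :
    ∑ i, ∑ a, w a * (upIndicator (H i) a * upCountMeeting H i a)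
      ≤ expectedUpCount H w + overlapSum H w := by
  rw [expectedUpCount, overlapSum, ← sum_add_distrib]
  refine sum_le_sum fun i _ => ?_
  have hdiag : ∑ j, (if j = i then upProb w (H i) else 0) = upProb w (H i) := by simp
  rw [sum_upIndicator_mul_upCountMeeting, ← hdiag, ← sum_add_distrib]
  refine sum_le_sum fun j _ => ?_
  by_cases hji : j = i
  · subst hji
    split_ifs <;> simp_all [upProb_nonneg hw]
  · split_ifs <;> simp_all [Ne.symm hji]

theorem IsJansonWeight.mul_laplace_upCountDisjoint_le (hw : IsJansonWeight w) (i : ι) {t : ℝ}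
    (ht : 0 ≤ t) :
    (upProb w (H i) - t * ∑ a, w a * (upIndicator (H i) a * upCountMeeting H i a))
        * laplace w (upCountDisjoint H i) t
      ≤ ∑ a, w a * (upIndicator (H i) a * exp (-(t * upCount H a))) := by
  set T := laplace w (upCountDisjoint H i) t
  have hindep : ∑ a, w a * (upIndicator (H i) a * exp (-(t * upCountDisjoint H i a)))
      = upProb w (H i) * T :=
    hw.sum_upIndicator_mul (H i) _ fun a => by rw [upCountDisjoint_sdiff]
  have hharris : ∑ a, w a * ((upIndicator (H i) a * upCountMeeting H i a)
      * exp (-(t * upCountDisjoint H i a)))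
      ≤ (∑ a, w a * (upIndicator (H i) a * upCountMeeting H i a)) * T :=
    sum_mul_mul_le_of_monotone_of_antitone hw.nonneg hw.sum_eq_one hw.mul_le_inf_mul_sup
      (upIndicator_mul_upCountMeeting_monotone H i)
      fun a b hab => exp_le_exp.2 (by nlinarith [upCountDisjoint_monotone H i hab])
  calc _ ≤ ∑ a, w a * (upIndicator (H i) a * exp (-(t * upCountDisjoint H i a)))
        - t * ∑ a, w a * ((upIndicator (H i) a * upCountMeeting H i a)
          * exp (-(t * upCountDisjoint H i a))) := by
        rw [hindep, sub_mul, mul_assoc]; gcongr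
    _ = ∑ a, w a * (upIndicator (H i) a
          * ((1 - t * upCountMeeting H i a) * exp (-(t * upCountDisjoint H i a)))) := by
        rw [mul_sum, ← sum_sub_distrib]
        exact sum_congr rfl fun a _ => by ring
    _ ≤ _ := sum_le_sum fun a _ => by
        gcongr
        · exact hw.nonneg a
        · exact upIndicator_nonneg _ _
        · exact one_sub_mul_mul_exp_le_exp H i a t

theorem IsJansonWeight.mul_laplace_upCount_le (hw : IsJansonWeight w) (i : ι) {t : ℝ}
    (ht : 0 ≤ t) :
    (upProb w (H i) - t * ∑ a, w a * (upIndicator (H i) a * upCountMeeting H i a))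
        * laplace w (upCount H) t
      ≤ ∑ a, w a * (upIndicator (H i) a * exp (-(t * upCount H a))) := by
  rcases le_or_gt 0 (upProb w (H i)
      - t * ∑ a, w a * (upIndicator (H i) a * upCountMeeting H i a)) with hc | hc
  · refine le_trans ?_ (hw.mul_laplace_upCountDisjoint_le H i ht)
    gcongr
    refine sum_le_sum fun a _ => mul_le_mul_of_nonneg_left (exp_le_exp.2 ?_) (hw.nonneg a)
    nlinarith [upCount_eq_add H i a, upCountMeeting_nonneg H i a]
  · exact (mul_nonpos_of_nonpos_of_nonneg hc.le (laplace_nonneg hw.nonneg _ t)).trans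
      (sum_nonneg fun a _ => mul_nonneg (hw.nonneg a)
        (mul_nonneg (upIndicator_nonneg _ _) (exp_pos _).le))

theorem IsJansonWeight.mul_laplace_le (hw : IsJansonWeight w) {t : ℝ} (ht : 0 ≤ t) :
    (expectedUpCount H w - (expectedUpCount H w + overlapSum H w) * t) * laplace w (upCount H) t
      ≤ ∑ a, w a * (upCount H a * exp (-(t * upCount H a))) := by
  have hψ := laplace_nonneg hw.nonneg (upCount H) t
  calc _ ≤ (expectedUpCount H w
          - t * ∑ i, ∑ a, w a * (upIndicator (H i) a * upCountMeeting H i a))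
          * laplace w (upCount H) t := by
        rw [mul_comm _ t]; gcongr; exact sum_sum_upIndicator_mul_upCountMeeting_le H hw.nonneg
    _ = ∑ i, (upProb w (H i) - t * ∑ a, w a * (upIndicator (H i) a * upCountMeeting H i a))
          * laplace w (upCount H) t := by
        rw [expectedUpCount, mul_sum, ← sum_sub_distrib, sum_mul]
    _ ≤ ∑ i, ∑ a, w a * (upIndicator (H i) a * exp (-(t * upCount H a))) :=
        sum_le_sum fun i _ => hw.mul_laplace_upCount_le H i ht
    _ = _ := by
        rw [sum_comm]
        simp only [upCount, ← mul_sum, ← sum_mul]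

theorem IsJansonWeight.laplace_le (hw : IsJansonWeight w) {t : ℝ} (ht : 0 ≤ t) :
    laplace w (upCount H) t
      ≤ exp ((expectedUpCount H w + overlapSum H w) / 2 * t ^ 2 - expectedUpCount H w * t) := by
  simpa [laplace_zero (upCount H) hw.sum_eq_one] using
    le_mul_exp_of_hasDerivAt (hasDerivAt_laplace w (upCount H))
      (fun s hs => by rw [neg_neg]; exact hw.mul_laplace_le H hs) ht

theorem IsJansonWeight.janson_lower_tail (hw : IsJansonWeight w) {γ : ℝ} (hγ : 0 ≤ γ) :
    ∑ a, w a * (if upCount H a < (1 - γ) * expectedUpCount H w then 1 else 0)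
      ≤ exp (-(γ ^ 2 * expectedUpCount H w ^ 2)
          / (2 * (expectedUpCount H w + overlapSum H w))) := by
  set μ := expectedUpCount H w
  set δ := overlapSum H w
  have hμ₀ : 0 ≤ μ := expectedUpCount_nonneg H hw.nonneg
  rcases hμ₀.eq_or_lt with hμ | hμ
  · calc _ ≤ ∑ a, w a := sum_le_sum fun a _ =>
          mul_le_of_le_one_right (hw.nonneg a) (by split_ifs <;> norm_num)
      _ = _ := by simp [hw.sum_eq_one, ← hμ]
  have hμδ : 0 < μ + δ := by linarith [overlapSum_nonneg H hw.nonneg]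
  have ht : 0 ≤ γ * μ / (μ + δ) := by positivity
  calc _ ≤ exp (γ * μ / (μ + δ) * ((1 - γ) * μ)) * laplace w (upCount H) (γ * μ / (μ + δ)) :=
        sum_ite_lt_le_exp_mul_laplace hw.nonneg _ ht
    _ ≤ exp (γ * μ / (μ + δ) * ((1 - γ) * μ))
          * exp ((μ + δ) / 2 * (γ * μ / (μ + δ)) ^ 2 - μ * (γ * μ / (μ + δ))) := by
        gcongr; exact hw.laplace_le H ht
    _ = _ := by
        rw [← exp_add]; congr 1
        field_simp
        ring

end Janson

section EdgeCount

variable {V : Type*} [Finite V]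

theorem edgeCount_mono {A B : SimpleGraph V} (h : A ≤ B) : edgeCount A ≤ edgeCount B := by
  simpa only [edgeCount, Nat.card_coe_set_eq] using
    Set.ncard_le_ncard (SimpleGraph.edgeSet_mono h)

theorem edgeCount_inf_add_edgeCount_sup (A B : SimpleGraph V) :
    edgeCount (A ⊓ B) + edgeCount (A ⊔ B) = edgeCount A + edgeCount B := by
  simp only [edgeCount, Nat.card_coe_set_eq, SimpleGraph.edgeSet_inf, SimpleGraph.edgeSet_sup]
  exact Set.ncard_inter_add_ncard_union _ _

theorem edgeCount_sup (A B : SimpleGraph V) :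
    edgeCount (A ⊔ B) = edgeCount A + edgeCount B - edgeCount (A ⊓ B) := by
  have := edgeCount_inf_add_edgeCount_sup A B
  omega

theorem edgeCount_inf_add_edgeCount_sdiff (G K : SimpleGraph V) :
    edgeCount (G ⊓ K) + edgeCount (G \ K) = edgeCount G := by
  simp only [edgeCount, Nat.card_coe_set_eq, SimpleGraph.edgeSet_inf, SimpleGraph.edgeSet_sdiff]
  exact Set.ncard_inter_add_ncard_sdiff_eq_ncard _ _

theorem edgeCount_add_edgeCount_compl (K : SimpleGraph V) :
    edgeCount K + edgeCount Kᶜ = edgeCount (⊤ : SimpleGraph V) := by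
  simpa using edgeCount_inf_add_edgeCount_sdiff ⊤ K

/-- The probability that bond percolation on `K` with parameter `p` leaves exactly the subgraph
`A ≤ K`. -/
noncomputable def percolationWeight (p : ℝ) (K A : SimpleGraph V) : ℝ :=
  p ^ edgeCount A * (1 - p) ^ (edgeCount K - edgeCount A)

theorem percolationWeight_top_eq_mul (p : ℝ) (G K : SimpleGraph V) :
    percolationWeight p ⊤ G
      = percolationWeight p K (G ⊓ K) * percolationWeight p Kᶜ (G \ K) := by
  have hG := edgeCount_inf_add_edgeCount_sdiff G K
  have hK := edgeCount_add_edgeCount_compl K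
  have h₁ := edgeCount_mono (inf_le_right : G ⊓ K ≤ K)
  have h₂ := edgeCount_mono (A := G \ K) (infSdiffEquiv K G).2.2
  rw [percolationWeight, percolationWeight, percolationWeight, ← hG, ← hK,
    show edgeCount K + edgeCount Kᶜ - (edgeCount (G ⊓ K) + edgeCount (G \ K))
      = (edgeCount K - edgeCount (G ⊓ K)) + (edgeCount Kᶜ - edgeCount (G \ K)) by omega]
  ring

theorem percolationWeight_inf_mul_sup (p : ℝ) (A B : SimpleGraph V) :
    percolationWeight p ⊤ (A ⊓ B) * percolationWeight p ⊤ (A ⊔ B)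
      = percolationWeight p ⊤ A * percolationWeight p ⊤ B := by
  have h := edgeCount_inf_add_edgeCount_sup A B
  have hA := edgeCount_mono (le_top : A ≤ ⊤)
  have hB := edgeCount_mono (le_top : B ≤ ⊤)
  have h₁ := edgeCount_mono (le_top : A ⊔ B ≤ ⊤)
  have h₂ := edgeCount_mono (inf_le_left : A ⊓ B ≤ A)
  simp only [percolationWeight]
  rw [mul_mul_mul_comm, ← pow_add, ← pow_add, mul_mul_mul_comm, ← pow_add, ← pow_add, h]
  congr 2
  omega

end EdgeCount

section Percolation

variable {V : Type*} [Fintype V]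

theorem edgeCount_eq_card_edgeFinset (G : SimpleGraph V) : edgeCount G = #G.edgeFinset := by
  rw [edgeCount, Nat.card_eq_fintype_card, SimpleGraph.edgeFinset_card]

theorem edgeCount_top : edgeCount (⊤ : SimpleGraph V) = (Fintype.card V).choose 2 := by
  rw [edgeCount, Nat.card_eq_fintype_card, ← SimpleGraph.edgeFinset_card,
    SimpleGraph.card_edgeFinset_top_eq_card_choose_two]

variable [DecidableEq V]

theorem sum_pow_edgeCount_mul_pow (K : SimpleGraph V) (x y : ℝ) :
    ∑ A : {A // A ≤ K}, x ^ edgeCount A.1 * y ^ (edgeCount K - edgeCount A.1)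
      = (x + y) ^ edgeCount K := by
  simp only [edgeCount_eq_card_edgeFinset]
  rw [← sum_pow_mul_eq_add_pow]
  refine sum_nbij' (fun A => A.1.edgeFinset)
    (fun s => ⟨SimpleGraph.fromEdgeSet ↑s ⊓ K, inf_le_right⟩) (fun A _ => ?_)
    (fun _ _ => mem_univ _) (fun A _ => ?_) (fun s hs => ?_) (fun _ _ => rfl)
  · exact mem_powerset.2 (SimpleGraph.edgeFinset_mono A.2)
  · ext1
    simp [inf_eq_left.2 A.2]
  · have hsK : ∀ e ∈ s, e ∈ K.edgeSet := fun e he =>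
      SimpleGraph.mem_edgeFinset.1 (mem_powerset.1 hs he)
    ext e
    simp only [SimpleGraph.mem_edgeFinset, SimpleGraph.edgeSet_inf,
      SimpleGraph.edgeSet_fromEdgeSet, Set.mem_inter_iff, Set.mem_sdiff, mem_coe]
    exact ⟨fun h => h.1.1, fun he =>
      ⟨⟨he, SimpleGraph.not_isDiag_of_mem_edgeSet K (hsK e he)⟩, hsK e he⟩⟩

theorem sum_percolationWeight (p : ℝ) (K : SimpleGraph V) :
    ∑ A : {A // A ≤ K}, percolationWeight p K A = 1 := by
  simpa [percolationWeight] using sum_pow_edgeCount_mul_pow K p (1 - p)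

theorem sum_percolationWeight_top (p : ℝ) :
    ∑ G : SimpleGraph V, percolationWeight p ⊤ G = 1 := by
  rw [← sum_percolationWeight p (⊤ : SimpleGraph V)]
  exact (Fintype.sum_equiv (Equiv.subtypeUnivEquiv fun _ => le_top) _ _ fun _ => rfl).symm

theorem sum_percolationWeight_top_mul (p : ℝ) (K : SimpleGraph V) (f : SimpleGraph V → ℝ) :
    ∑ G, percolationWeight p ⊤ G * f G = ∑ A : {A // A ≤ K}, ∑ B : {B // B ≤ Kᶜ},
      percolationWeight p K A * percolationWeight p Kᶜ B * f (A ⊔ B) := by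
  refine (Fintype.sum_equiv (infSdiffEquiv K) _ (fun AB =>
    percolationWeight p K AB.1 * percolationWeight p Kᶜ AB.2 * f (AB.1 ⊔ AB.2)) fun G => ?_).trans
    (Fintype.sum_prod_type _)
  simp only [infSdiffEquiv, Equiv.coe_fn_mk, sup_inf_sdiff, percolationWeight_top_eq_mul p G K]

theorem sum_percolationWeight_top_upIndicator_mul (p : ℝ) (K : SimpleGraph V)
    (f : SimpleGraph V → ℝ) (hf : ∀ G, f (G \ K) = f G) :
    ∑ G, percolationWeight p ⊤ G * (upIndicator K G * f G)
      = p ^ edgeCount K * ∑ G, percolationWeight p ⊤ G * f G := by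
  have hK : ∑ A : {A // A ≤ K}, percolationWeight p K A * upIndicator K A = p ^ edgeCount K := by
    rw [sum_eq_single ⟨K, le_rfl⟩ (fun A _ hA => by
      rw [upIndicator, if_neg fun h => hA (Subtype.ext (le_antisymm A.2 h)), mul_zero])
      (by simp)]
    simp [percolationWeight, upIndicator]
  have hfB : ∀ (A : {A // A ≤ K}) (B : {B // B ≤ Kᶜ}), f (A ⊔ B) = f B := fun A B => by
    rw [← hf, sup_sdiff_eq_right_of_disjoint A.2 (le_compl_iff_disjoint_right.1 B.2)]
  have hind : ∀ (A : {A // A ≤ K}) (B : {B // B ≤ Kᶜ}),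
      upIndicator K (A ⊔ B) = upIndicator K A :=
    fun _ B => upIndicator_sup_of_disjoint (le_compl_iff_disjoint_right.1 B.2).symm
  rw [sum_percolationWeight_top_mul p K, sum_percolationWeight_top_mul p K]
  calc _ = (∑ A : {A // A ≤ K}, percolationWeight p K A * upIndicator K A)
        * ∑ B : {B // B ≤ Kᶜ}, percolationWeight p Kᶜ B * f B := by
        rw [sum_mul_sum]
        exact sum_congr rfl fun A _ => sum_congr rfl fun B _ => by rw [hind, hfB]; ring
    _ = p ^ edgeCount K * ((∑ A : {A // A ≤ K}, percolationWeight p K A)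
        * ∑ B : {B // B ≤ Kᶜ}, percolationWeight p Kᶜ B * f B) := by
        rw [hK, sum_percolationWeight, one_mul]
    _ = _ := by
        rw [sum_mul_sum]
        exact congrArg _ (sum_congr rfl fun A _ => sum_congr rfl fun B _ => by rw [hfB]; ring)

theorem upProb_percolationWeight_top (p : ℝ) (K : SimpleGraph V) :
    upProb (percolationWeight p ⊤) K = p ^ edgeCount K := by
  simpa [upProb, sum_percolationWeight_top] using
    sum_percolationWeight_top_upIndicator_mul p K (fun _ => 1) fun _ => rfl

theorem isJansonWeight_percolationWeight_top {p : ℝ} (hp₀ : 0 ≤ p) (hp₁ : p ≤ 1) :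
    IsJansonWeight (percolationWeight p (⊤ : SimpleGraph V)) where
  nonneg _ := mul_nonneg (pow_nonneg hp₀ _) (pow_nonneg (sub_nonneg.2 hp₁) _)
  sum_eq_one := sum_percolationWeight_top p
  mul_le_inf_mul_sup A B := (percolationWeight_inf_mul_sup p A B).ge
  sum_upIndicator_mul K f hf := by
    rw [sum_percolationWeight_top_upIndicator_mul p K f hf, upProb_percolationWeight_top]

end Percolation

/-- `H i` is a spanning subgraph of `K_n`: isolated vertices change neither `e(H i)` nor the
event `H i ⊆ G`. -/
theorem janson_inequality_general (n : ℕ) (p : ℝ) (hp : p ∈ Set.Ioo (0 : ℝ) 1)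
    {ι : Type*} [Fintype ι] (H : ι → SimpleGraph (Fin n))
    (μ δ : ℝ)
    (hμ : μ = ∑ i : ι, p ^ edgeCount (H i))
    (hδ : δ = ∑ i : ι, ∑ j : ι,
      if i ≠ j ∧ (H i ⊓ H j).edgeSet.Nonempty then
        p ^ (edgeCount (H i) + edgeCount (H j) - edgeCount (H i ⊓ H j))
      else 0)
    (γ : ℝ) (hγ : 0 < γ) :
    gnpProb n p (fun G => (∑ i : ι, if H i ≤ G then (1 : ℝ) else 0) < (1 - γ) * μ) ≤
      Real.exp (-(γ ^ 2 * μ ^ 2) / (2 * (μ + δ))) := by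
  have hμ' : μ = expectedUpCount H (percolationWeight p ⊤) := by
    simp only [hμ, expectedUpCount, upProb_percolationWeight_top]
  have hδ' : δ = overlapSum H (percolationWeight p ⊤) := by
    simp only [hδ, overlapSum, upProb_percolationWeight_top, SimpleGraph.edgeSet_nonempty,
      ne_eq, ← disjoint_iff, edgeCount_sup]
  have hprob : gnpProb n p (fun G => (∑ i : ι, if H i ≤ G then (1 : ℝ) else 0) < (1 - γ) * μ)
      = ∑ G, percolationWeight p ⊤ G * (if upCount H G < (1 - γ) * μ then 1 else 0) := by
    simp [gnpProb, percolationWeight, edgeCount_top, upCount, upIndicator]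
  rw [hprob, hμ', hδ']
  exact (isJansonWeight_percolationWeight_top hp.1.le hp.2.le).janson_lower_tail H hγ.le

/-- Janson's inequality, graph version.  `H i`, for `i` in a finite index type `ι`, is a family
of (spanning) subgraphs of the complete graph on vertex set `Fin n`; the event `H i ⊆ G` is
`H i ≤ G`, and `H i ⊓ H j` is the graph whose edge set is `E(H i) ∩ E(H j)`. -/
theorem janson_inequality (n : ℕ) (p : ℝ) (hp : p ∈ Set.Ioo (0 : ℝ) 1)
    {ι : Type*} [Fintype ι] (H : ι → SimpleGraph (Fin n))
    (μ δ : ℝ)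
    (hμ : μ = ∑ i : ι, p ^ edgeCount (H i))
    (hδ : δ = ∑ i : ι, ∑ j : ι,
      if i ≠ j ∧ (H i ⊓ H j).edgeSet.Nonempty then
        p ^ (edgeCount (H i) + edgeCount (H j) - edgeCount (H i ⊓ H j))
      else 0)
    (γ : ℝ) (hγ : 0 < γ) (hγ1 : γ < 1) :
    gnpProb n p (fun G => (∑ i : ι, if H i ≤ G then (1 : ℝ) else 0) < (1 - γ) * μ) ≤
      Real.exp (-(γ ^ 2 * μ ^ 2) / (2 * (μ + δ))) :=
  janson_inequality_general n p hp H μ δ hμ hδ γ hγ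
end

section
/- Let r ≥ 1 be an integer and let H be a graph in which every connected component has at least r vertices. If I ⊆ V(H) is a set of vertices such that any two distinct vertices of I are at graph distance at least 2r + 1 in H (i.e., I is 2r-independent), then |I| ≤ v(H)/r. -/
open Finset

/-! The open balls of radius `r` around the vertices of `I` are pairwise disjoint, since their
centres are more than `2r` apart. Each contains at least `r` vertices: either it exhausts the
component of its centre, or a path from the centre to a vertex outside it has its first `r`
vertices inside it. Hence `r * |I| ≤ v(H)`. -/

namespace SimpleGraph

variable {V : Type*} {G : SimpleGraph V} {u v : V}

theorem le_edist_of_forall_le_length {n : ℕ∞} (h : ∀ p : G.Walk u v, n ≤ p.length) :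
    n ≤ G.edist u v :=
  le_sInf <| Set.forall_mem_range.2 h

theorem disjoint_ball_of_add_le_edist {r₁ r₂ : ℕ∞} (h : r₁ + r₂ ≤ G.edist u v) :
    Disjoint (G.ball u r₁) (G.ball v r₂) := by
  refine Set.disjoint_left.2 fun w hwu hwv => ?_
  rw [mem_ball, edist_comm] at hwu
  have := (G.edist_triangle (v := w)).trans_lt (ENat.add_lt_add hwu hwv)
  exact this.not_ge h

theorem Walk.getVert_mem_ball (p : G.Walk u v) {i : ℕ} {n : ℕ∞} (hi : (i : ℕ∞) < n) :
    p.getVert i ∈ G.ball u n := by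
  rw [mem_ball, edist_comm]
  calc G.edist u (p.getVert i) ≤ (p.take i).length := (p.take i).edist_le
    _ ≤ i := by simp
    _ < n := hi

theorem le_ncard_ball [Finite V] {n : ℕ} (h : n ≤ Nat.card {w | G.Reachable v w}) :
    n ≤ (G.ball v n).ncard := by
  by_cases hsub : {w | G.Reachable v w} ⊆ G.ball v n
  · exact h.trans ((Nat.card_coe_set_eq _).trans_le (Set.ncard_le_ncard hsub))
  obtain ⟨w, ⟨p⟩, hw⟩ := Set.not_subset.1 hsub
  classical
  have hpath := p.bypass_isPath
  have hlen : n ≤ p.bypass.length := by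
    rw [mem_ball, not_lt, edist_comm] at hw
    exact_mod_cast hw.trans p.bypass.edist_le
  calc n = (Set.Iio n).ncard := (Set.ncard_Iio_nat n).symm
    _ ≤ (G.ball v n).ncard :=
      Set.ncard_le_ncard_of_injOn p.bypass.getVert
        (fun i hi => p.bypass.getVert_mem_ball (by exact_mod_cast hi))
        (hpath.getVert_injOn.mono fun i hi => hi.le.trans hlen) (Set.toFinite _)

end SimpleGraph

theorem Set.PairwiseDisjoint.card_mul_le_card {ι α : Type*} [Finite α] {s : Finset ι}
    {f : ι → Set α} {n : ℕ} (hs : (s : Set ι).PairwiseDisjoint f) (hf : ∀ i ∈ s, n ≤ (f i).ncard) :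
    #s * n ≤ Nat.card α := by
  classical
  have := Fintype.ofFinite α
  calc #s * n = ∑ _ ∈ s, n := by rw [sum_const, smul_eq_mul]
    _ ≤ ∑ i ∈ s, (f i).toFinset.card := sum_le_sum fun i hi => by
          rw [← Set.ncard_eq_toFinset_card']; exact hf i hi
    _ = #(s.biUnion fun i => (f i).toFinset) :=
          (card_biUnion fun i hi j hj hij => Set.disjoint_toFinset.2 (hs hi hj hij)).symm
    _ ≤ Nat.card α := by rw [Nat.card_eq_fintype_card]; exact card_le_univ _

/-- If every connected component of `H` has at least `r` vertices and `I` is a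
`2r`-independent set (any two distinct vertices of `I` are at graph distance at least
`2r + 1`), then `|I| ≤ v(H) / r`. -/
theorem independent_set_bound
    (r : ℕ) (hr : 1 ≤ r) {β : Type*} [Fintype β] (H : SimpleGraph β)
    (hcomp : ∀ v : β, r ≤ Nat.card {w : β | H.Reachable v w})
    (I : Finset β)
    (hI : ∀ u ∈ I, ∀ v ∈ I, u ≠ v → ∀ w : H.Walk u v, 2 * r + 1 ≤ w.length) :
    (I.card : ℝ) ≤ (Fintype.card β : ℝ) / (r : ℝ) := by
  have hdisj : (I : Set β).PairwiseDisjoint fun v => H.ball v r := by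
    intro u hu v hv huv
    refine SimpleGraph.disjoint_ball_of_add_le_edist <|
      SimpleGraph.le_edist_of_forall_le_length fun p => ?_
    have := hI u hu v hv huv p
    exact_mod_cast (by omega : r + r ≤ p.length)
  have hcount : I.card * r ≤ Fintype.card β := by
    simpa using hdisj.card_mul_le_card fun v _ => SimpleGraph.le_ncard_ball (hcomp v)
  rw [le_div_iff₀ (by exact_mod_cast hr)]
  exact_mod_cast hcount
end

section
/- Let Δ ≥ 2 and q ≥ 1 be integers, let ε > 0, and let H be a graph on m vertices with maximum degree at most Δ. Suppose that H has at least ⌊εm⌋ isolated vertices and that every vertex of H is at graph distance at most q − 1 from some vertex of degree at most Δ − 1. Then H belongs to the family F(m, (Δ² + 1)q + 1, ε, Δ − 1). -/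
/-!
Colour the square of `H` greedily with `Δ² + 1` colours and let `h v ≤ q - 1` be the distance
from `v` to the nearest vertex of degree less than `Δ`. Put `⌊εm⌋` isolated vertices into `W t`,
and every other vertex `v` into the part whose index encodes `(q - 1 - h v, colour of v)`
lexicographically. Parts are colour classes of the square, hence 2-independent. A vertex `v` with
`h v > 0` has a neighbour `u` with `h u < h v`, which lies in a later part, so at most `Δ - 1`
neighbours of `v` come earlier; a vertex with `h v = 0` has at most `Δ - 1` neighbours anyway.
Finally `W 0 = Γ(W t)` is empty since `W t` consists of isolated vertices.
-/

open Finset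

/-- `H` has maximum degree at most `Δ`. -/
def maxDegLE {β : Type*} (H : SimpleGraph β) (Δ : ℕ) : Prop :=
  ∀ v, Nat.card (H.neighborSet v) ≤ Δ

/-- `S` is a `k`-independent set in `H`: every two distinct vertices of `S` are at
graph distance at least `k + 1`. -/
def kIndepSet {β : Type*} (H : SimpleGraph β) (k : ℕ) (S : Set β) : Prop :=
  ∀ u ∈ S, ∀ v ∈ S, u ≠ v → ∀ w : H.Walk u v, k + 1 ≤ w.length

/-- Membership in the family `𝓕(n, t, ε, d)`: there is a partition
`W 0, W 1, …, W t` of the vertex set (parts may be empty) with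
(i) `|W t| = ⌊ε n⌋`, (ii) `W 0` is the external neighborhood of `W t`,
(iii) `W t` is 3-independent, (iv) `W i` is 2-independent for `1 ≤ i ≤ t - 1`, and
(v) for `1 ≤ i ≤ t`, each `w ∈ W i` has at most `d` neighbors in `W 0 ∪ ⋯ ∪ W (i-1)`. -/
def inFamilyF (n t d : ℕ) (ε : ℝ) (H : SimpleGraph (Fin n)) : Prop :=
  ∃ W : ℕ → Set (Fin n),
    (∀ i ≤ t, ∀ j ≤ t, i ≠ j → Disjoint (W i) (W j)) ∧
    (⋃ i ∈ Finset.range (t + 1), W i) = Set.univ ∧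
    Nat.card (W t) = ⌊ε * n⌋₊ ∧
    W 0 = {v | v ∉ W t ∧ ∃ u ∈ W t, H.Adj u v} ∧
    kIndepSet H 3 (W t) ∧
    (∀ i, 1 ≤ i → i ≤ t - 1 → kIndepSet H 2 (W i)) ∧
    (∀ i, 1 ≤ i → i ≤ t → ∀ w ∈ W i,
      Nat.card {v | H.Adj w v ∧ ∃ j < i, v ∈ W j} ≤ d)

namespace SimpleGraph

variable {V : Type*} {G : SimpleGraph V}

def power (G : SimpleGraph V) (k : ℕ) : SimpleGraph V where
  Adj u v := u ≠ v ∧ ∃ p : G.Walk u v, p.length ≤ k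
  symm := ⟨by
    rintro u v ⟨hne, p, hp⟩
    exact ⟨hne.symm, p.reverse, by rwa [Walk.length_reverse]⟩⟩
  loopless := ⟨fun _ h => h.1 rfl⟩

theorem Walk.adj_or_exists_adj_adj_of_length_le_two {u v : V} (p : G.Walk u v) (hne : u ≠ v)
    (hp : p.length ≤ 2) : G.Adj u v ∨ ∃ w, G.Adj u w ∧ G.Adj w v := by
  rcases p with _ | ⟨h, _ | ⟨h', _ | ⟨_, _⟩⟩⟩
  · exact absurd rfl hne
  · exact .inl h
  · exact .inr ⟨_, h, h'⟩
  · simp at hp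

theorem degree_power_two_le [Fintype V] [DecidableRel G.Adj] [DecidableRel (G.power 2).Adj]
    {Δ : ℕ} (h : ∀ v, G.degree v ≤ Δ) (v : V) : (G.power 2).degree v ≤ Δ ^ 2 := by
  classical
  have hsub : (G.power 2).neighborFinset v ⊆
      (G.neighborFinset v).biUnion fun w => (insert w (G.neighborFinset w)).erase v := by
    intro u hu
    obtain ⟨hne, p, hp⟩ := (mem_neighborFinset _ _ _).1 hu
    simp only [mem_biUnion, mem_erase, mem_insert, mem_neighborFinset]
    rcases p.adj_or_exists_adj_adj_of_length_le_two hne hp with hvu | ⟨w, hvw, hwu⟩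
    · exact ⟨u, hvu, hne.symm, .inl rfl⟩
    · exact ⟨w, hvw, hne.symm, .inr hwu⟩
  have hfiber : ∀ w ∈ G.neighborFinset v, #((insert w (G.neighborFinset w)).erase v) ≤ Δ := by
    intro w hw
    have hv : v ∈ insert w (G.neighborFinset w) :=
      mem_insert_of_mem ((mem_neighborFinset _ _ _).2 ((mem_neighborFinset _ _ _).1 hw).symm)
    have hins := card_insert_le w (G.neighborFinset w)
    rw [card_neighborFinset_eq_degree] at hins
    rw [card_erase_of_mem hv]
    have := h w
    omega
  calc (G.power 2).degree v = #((G.power 2).neighborFinset v) := rfl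
    _ ≤ ∑ w ∈ G.neighborFinset v, #((insert w (G.neighborFinset w)).erase v) :=
      (card_le_card hsub).trans card_biUnion_le
    _ ≤ G.degree v * Δ := by simpa using sum_le_sum hfiber
    _ ≤ Δ ^ 2 := by rw [sq]; exact Nat.mul_le_mul_right _ (h v)

theorem colorable_of_forall_degree_le [Fintype V] [DecidableRel G.Adj] {D : ℕ}
    (h : ∀ v, G.degree v ≤ D) : G.Colorable (D + 1) := by
  classical
  suffices ∀ s : Finset V, ∃ c : V → Fin (D + 1), ∀ u ∈ s, ∀ v ∈ s, G.Adj u v → c u ≠ c v by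
    obtain ⟨c, hc⟩ := this univ
    exact ⟨Coloring.mk c fun huv => hc _ (mem_univ _) _ (mem_univ _) huv⟩
  intro s
  induction s using Finset.induction_on with
  | empty => exact ⟨fun _ => 0, by simp⟩
  | insert a s has ih =>
    obtain ⟨c, hc⟩ := ih
    obtain ⟨x, -, hx⟩ : ∃ x ∈ (univ : Finset (Fin (D + 1))), x ∉ (G.neighborFinset a).image c :=
      exists_mem_notMem_of_card_lt_card <| by
        simpa [Nat.lt_succ_iff] using card_image_le.trans (h a)
    have hnew : ∀ v, G.Adj a v → Function.update c a x a ≠ Function.update c a x v := by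
      intro v hav
      rw [Function.update_self, Function.update_of_ne hav.ne.symm]
      rintro rfl
      exact hx (mem_image_of_mem c ((mem_neighborFinset _ _ _).2 hav))
    refine ⟨Function.update c a x, fun u hu v hv huv => ?_⟩
    rcases mem_insert.1 hu with rfl | hu <;> rcases mem_insert.1 hv with rfl | hv
    · exact absurd huv (G.irrefl)
    · exact hnew v huv
    · exact (hnew u huv.symm).symm
    · rw [Function.update_of_ne (ne_of_mem_of_not_mem hu has),
        Function.update_of_ne (ne_of_mem_of_not_mem hv has)]
      exact hc u hu v hv huv

theorem exists_height_descending_to {P : V → Prop} {k : ℕ}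
    (h : ∀ v, ∃ w, (∃ p : G.Walk v w, p.length ≤ k) ∧ P w) :
    ∃ d : V → ℕ, (∀ v, d v ≤ k) ∧ ∀ v, P v ∨ ∃ u, G.Adj v u ∧ d u < d v := by
  classical
  have hex : ∀ v, ∃ n, ∃ w, (∃ p : G.Walk v w, p.length = n) ∧ P w := fun v => by
    obtain ⟨w, ⟨p, -⟩, hw⟩ := h v
    exact ⟨p.length, w, ⟨p, rfl⟩, hw⟩
  refine ⟨fun v => Nat.find (hex v), fun v => ?_, fun v => ?_⟩
  · obtain ⟨w, ⟨p, hp⟩, hw⟩ := h v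
    exact (Nat.find_min' (hex v) ⟨w, ⟨p, rfl⟩, hw⟩).trans hp
  · obtain ⟨w, ⟨p, hp⟩, hw⟩ := Nat.find_spec (hex v)
    cases p with
    | nil => exact .inl hw
    | cons hadj p =>
      refine .inr ⟨_, hadj, ?_⟩
      dsimp only
      have := Nat.find_min' (hex _) ⟨w, ⟨p, rfl⟩, hw⟩
      rw [Walk.length_cons] at hp
      omega

theorem ncard_neighborSet_eq_degree [Fintype V] [DecidableRel G.Adj] (v : V) :
    (G.neighborSet v).ncard = G.degree v := by
  rw [← Nat.card_coe_set_eq, Nat.card_eq_fintype_card, card_neighborSet_eq_degree]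

theorem ncard_adj_lt_le_sub_one [Fintype V] [DecidableRel G.Adj] {f : V → ℕ} {v : V} {Δ : ℕ}
    (hdeg : G.degree v ≤ Δ) (h : G.degree v ≤ Δ - 1 ∨ ∃ u, G.Adj v u ∧ f v < f u) :
    {u | G.Adj v u ∧ f u < f v}.ncard ≤ Δ - 1 := by
  rcases h with hlow | ⟨u, hvu, hlt⟩
  · calc {u | G.Adj v u ∧ f u < f v}.ncard ≤ (G.neighborSet v).ncard :=
          Set.ncard_le_ncard fun _ hw => hw.1
      _ ≤ Δ - 1 := by rwa [ncard_neighborSet_eq_degree]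
  · calc {u | G.Adj v u ∧ f u < f v}.ncard ≤ (G.neighborSet v \ {u}).ncard :=
          Set.ncard_le_ncard fun w hw => ⟨hw.1, by rintro rfl; exact hw.2.not_gt hlt⟩
      _ = G.degree v - 1 := by
        rw [Set.ncard_sdiff_singleton_of_mem (show u ∈ G.neighborSet v from hvu),
          ncard_neighborSet_eq_degree]
      _ ≤ Δ - 1 := Nat.sub_le_sub_right hdeg 1

end SimpleGraph

theorem kIndepSet_iff_pairwise_not_power_adj {V : Type*} {G : SimpleGraph V} {k : ℕ}
    {S : Set V} :
    kIndepSet G k S ↔ S.Pairwise fun u v => ¬ (G.power k).Adj u v := by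
  simp only [kIndepSet, Set.Pairwise, SimpleGraph.power, not_and, not_exists, not_le,
    Nat.lt_iff_add_one_le]
  exact ⟨fun h u hu v hv hne _ => h u hu v hv hne, fun h u hu v hv hne => h hu hv hne hne⟩

theorem exists_lex_index {V : Type*} {K N : ℕ} (h : V → ℕ) (hh : ∀ v, h v ≤ K) (c : V → Fin N) :
    ∃ ι : V → ℕ, (∀ v, 1 ≤ ι v ∧ ι v < (K + 1) * N + 1) ∧ (∀ u v, ι u = ι v → c u = c v) ∧
      ∀ u v, h u < h v → ι v < ι u := by
  have lex : ∀ {a a' b b' : ℕ}, b < N → a < a' → a * N + b < a' * N + b' := fun hb ha => by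
    nlinarith
  refine ⟨fun v => (K - h v) * N + c v + 1, fun v => ⟨Nat.le_add_left 1 _, ?_⟩, fun u v huv => ?_,
    fun u v huv => ?_⟩
  · have := lex (b' := 0) (c v).isLt (show K - h v < K + 1 by omega)
    linarith
  · dsimp only at huv
    rcases lt_trichotomy (K - h u) (K - h v) with hlt | heq | hgt
    · linarith [lex (b' := c v) (c u).isLt hlt]
    · rw [heq] at huv
      exact Fin.ext (by linarith)
    · linarith [lex (b' := c u) (c v).isLt hgt]
  · have := hh u
    have := hh v
    linarith [lex (b' := c u) (c v).isLt (show K - h v < K - h u by omega)]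

theorem inFamilyF_of_index {n t d : ℕ} {ε : ℝ} {H : SimpleGraph (Fin n)} (S : Set (Fin n))
    (ι : Fin n → ℕ) (hScard : S.ncard = ⌊ε * n⌋₊) (hSiso : ∀ v ∈ S, ∀ w, ¬ H.Adj v w)
    (hι_pos : ∀ v, 1 ≤ ι v) (hι_lt : ∀ v, ι v < t)
    (hι_indep : ∀ u v, ι u = ι v → ¬ (H.power 2).Adj u v)
    (hι_back : ∀ v, {u | H.Adj v u ∧ ι u < ι v}.ncard ≤ d) :
    inFamilyF n t d ε H := by
  classical
  -- `W t = S`, and every other vertex goes to the part `W (ι v)`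
  set κ : Fin n → ℕ := fun v => if v ∈ S then t else ι v with hκ
  have hκ_of_notMem : ∀ v ∉ S, κ v = ι v := fun v hv => if_neg hv
  have hκ_eq_t : ∀ v, κ v = t ↔ v ∈ S := fun v => by
    by_cases hv : v ∈ S <;> simp [hκ, hv, (hι_lt v).ne]
  have hκ_pos : ∀ v, 1 ≤ κ v := fun v => by
    by_cases hv : v ∈ S <;> simp only [hκ, hv, if_true, if_false] <;> linarith [hι_pos v, hι_lt v]
  have hnotMem_of_adj : ∀ {u v}, H.Adj u v → u ∉ S := fun huv hu => hSiso _ hu _ huv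
  have hWt : {v | κ v = t} = S := Set.ext hκ_eq_t
  refine ⟨fun i => {v | κ v = i}, fun i _ j _ hij => ?_, ?_, ?_, ?_, ?_, ?_, ?_⟩
  all_goals dsimp only
  · exact Set.disjoint_left.2 fun v hi hj => hij (hi.symm.trans hj)
  · refine Set.eq_univ_of_forall fun v => Set.mem_biUnion (mem_range.2 ?_) rfl
    by_cases hv : v ∈ S <;> simp only [hκ, hv, if_true, if_false] <;> linarith [hι_lt v]
  · rw [hWt, Nat.card_coe_set_eq, hScard]
  · rw [hWt]
    ext v
    refine ⟨fun (h : κ v = 0) => by have := hκ_pos v; omega, ?_⟩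
    rintro ⟨-, u, hu, huv⟩
    exact absurd huv (hSiso u hu v)
  · rw [hWt]
    rintro u hu v - hne (_ | ⟨huw, _⟩)
    · exact absurd rfl hne
    · exact absurd huw (hSiso u hu _)
  · intro i _ hit
    rw [kIndepSet_iff_pairwise_not_power_adj]
    intro u hu v hv _
    have hiS : ∀ {w}, κ w = i → w ∉ S := fun hw hwS => by
      rw [(hκ_eq_t _).2 hwS] at hw
      omega
    exact hι_indep u v (by rw [← hκ_of_notMem u (hiS hu), ← hκ_of_notMem v (hiS hv), hu, hv])
  · intro i _ _ w hw
    rw [Nat.card_coe_set_eq]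
    refine (Set.ncard_le_ncard fun v hv => ?_).trans (hι_back w)
    obtain ⟨hwv, j, hji, hv⟩ := hv
    refine ⟨hwv, ?_⟩
    rw [← hκ_of_notMem v (hnotMem_of_adj hwv.symm), ← hκ_of_notMem w (hnotMem_of_adj hwv)]
    exact (hv : κ v = j).trans_lt (hji.trans_eq hw.symm)

theorem partition_into_familyF_general
    (Δ q m : ℕ) (hq : 1 ≤ q) (ε : ℝ)
    (H : SimpleGraph (Fin m)) (hdeg : maxDegLE H Δ)
    (hiso : ⌊ε * m⌋₊ ≤ Nat.card {v : Fin m | ∀ w, ¬ H.Adj v w})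
    (hnear : ∀ v : Fin m, ∃ w : Fin m,
      (∃ pth : H.Walk v w, pth.length ≤ q - 1) ∧ Nat.card (H.neighborSet w) ≤ Δ - 1) :
    inFamilyF m ((Δ ^ 2 + 1) * q + 1) (Δ - 1) ε H := by
  classical
  have hcard : ∀ v, Nat.card (H.neighborSet v) = H.degree v := fun v => by
    rw [Nat.card_coe_set_eq, H.ncard_neighborSet_eq_degree]
  have hdegH : ∀ v, H.degree v ≤ Δ := fun v => hcard v ▸ hdeg v
  obtain ⟨S, hSiso, hScard⟩ := Set.exists_subset_card_eq (Nat.card_coe_set_eq _ ▸ hiso)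
  obtain ⟨c⟩ := (H.power 2).colorable_of_forall_degree_le (H.degree_power_two_le hdegH)
  obtain ⟨h, hh_le, hh_desc⟩ := H.exists_height_descending_to hnear
  obtain ⟨ι, hι_range, hι_color, hι_anti⟩ := exists_lex_index h hh_le c
  refine inFamilyF_of_index S ι hScard hSiso (fun v => (hι_range v).1) (fun v => ?_)
    (fun u v huv hadj => c.valid hadj (hι_color u v huv)) (fun v => ?_)
  · simpa [Nat.sub_add_cancel hq, mul_comm] using (hι_range v).2
  · refine H.ncard_adj_lt_le_sub_one (hdegH v) ((hh_desc v).imp (fun hv => hcard v ▸ hv) ?_)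
    exact fun ⟨u, hvu, hlt⟩ => ⟨u, hvu, hι_anti u v hlt⟩

/-- A graph on `m` vertices with maximum degree at most `Δ`, at least `⌊ε m⌋` isolated
vertices, in which every vertex is within distance `q - 1` of a vertex of degree at most
`Δ - 1`, belongs to the family `𝓕(m, (Δ² + 1) q + 1, ε, Δ - 1)`. -/
theorem partition_into_familyF
    (Δ q m : ℕ) (hΔ : 2 ≤ Δ) (hq : 1 ≤ q) (ε : ℝ) (hε : 0 < ε)
    (H : SimpleGraph (Fin m)) (hdeg : maxDegLE H Δ)
    (hiso : ⌊ε * m⌋₊ ≤ Nat.card {v : Fin m | ∀ w, ¬ H.Adj v w})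
    (hnear : ∀ v : Fin m, ∃ w : Fin m,
      (∃ pth : H.Walk v w, pth.length ≤ q - 1) ∧ Nat.card (H.neighborSet w) ≤ Δ - 1) :
    inFamilyF m ((Δ ^ 2 + 1) * q + 1) (Δ - 1) ε H :=
  partition_into_familyF_general Δ q m hq ε H hdeg hiso hnear
end
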